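/- arXiv:1803.04124 — 4 statements merged into one kernel-verified Lean document; each statement's English description precedes it below -/
import Mathlib

section
/- Let A be a bimonoid and B a Hopf monoid with antipode z in M, and let s : A → B and i : B → A be bimonoid morphisms with s∘i = 1_B and c∘(s⊗1_A)∘δ_A = (1_A⊗s)∘δ_A. Let j : E → A be the equalizer of (1_A⊗s)∘δ_A and 1_A⊗u_B, let r : A → E⊗B be the unique morphism with (j⊗1_B)∘r = (⃗s⊗s)∘δ_A where ⃗s := m_A∘(1_A⊗(i∘z∘s))∘δ_A, and set g := (1_E⊗ε_B)∘r : A → E. Then g∘j = 1_E and j∘g = ⃗s; in particular j is a split monomorphism in M. -/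
open CategoryTheory Category MonoidalCategory Limits

universe v u

variable {C : Type u} [Category.{v} C] [MonoidalCategory C]

/-- The middle-four interchange `(W ⊗ X) ⊗ (Y ⊗ Z) ⟶ (W ⊗ Y) ⊗ (X ⊗ Z)`,
i.e. `1 ⊗ c ⊗ 1` with the (suppressed) coherence isomorphisms inserted. -/
def mid4 [BraidedCategory C] (W X Y Z : C) :
    (W ⊗ X) ⊗ (Y ⊗ Z) ⟶ (W ⊗ Y) ⊗ (X ⊗ Z) :=
  (α_ W X (Y ⊗ Z)).hom ≫ (W ◁ (α_ X Y Z).inv) ≫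
    (W ◁ ((β_ X Y).hom ▷ Z)) ≫ (W ◁ (α_ Y X Z).hom) ≫ (α_ W Y (X ⊗ Z)).inv

/-- A monoid structure `(A, m, u)` on the object `A`. -/
structure MonObj (A : C) where
  mul : A ⊗ A ⟶ A
  one : 𝟙_ C ⟶ A
  one_mul : (one ▷ A) ≫ mul = (λ_ A).hom
  mul_one : (A ◁ one) ≫ mul = (ρ_ A).hom
  mul_assoc : (mul ▷ A) ≫ mul = (α_ A A A).hom ≫ (A ◁ mul) ≫ mul

/-- A comonoid structure `(A, δ, ε)` on the object `A`. -/
structure ComonObj (A : C) where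
  comul : A ⟶ A ⊗ A
  counit : A ⟶ 𝟙_ C
  counit_comul : comul ≫ (counit ▷ A) = (λ_ A).inv
  comul_counit : comul ≫ (A ◁ counit) = (ρ_ A).inv
  comul_assoc : comul ≫ (comul ▷ A) ≫ (α_ A A A).hom = comul ≫ (A ◁ comul)

/-- A bimonoid structure on the object `A`: a monoid and comonoid structure such that
the comultiplication and counit are monoid morphisms (`A ⊗ A` carrying the multiplication
`(m ⊗ m) ∘ (1 ⊗ c ⊗ 1)` and unit `u ⊗ u`). -/
structure BimonObj [BraidedCategory C] (A : C) extends _root_.MonObj A, _root_.ComonObj A where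
  mul_comul : mul ≫ comul = (comul ⊗ₘ comul) ≫ mid4 A A A A ≫ (mul ⊗ₘ mul)
  one_comul : one ≫ comul = (λ_ (𝟙_ C)).inv ≫ (one ⊗ₘ one)
  mul_counit : mul ≫ counit = (counit ⊗ₘ counit) ≫ (λ_ (𝟙_ C)).hom
  one_counit : one ≫ counit = 𝟙 (𝟙_ C)

/-- `f` is a morphism of monoids. -/
def IsMonHom {A B : C} (MA : _root_.MonObj A) (MB : _root_.MonObj B) (f : A ⟶ B) : Prop :=
  MA.mul ≫ f = (f ⊗ₘ f) ≫ MB.mul ∧ MA.one ≫ f = MB.one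

/-- `f` is a morphism of comonoids. -/
def IsComonHom {A B : C} (MA : _root_.ComonObj A) (MB : _root_.ComonObj B) (f : A ⟶ B) : Prop :=
  f ≫ MB.comul = MA.comul ≫ (f ⊗ₘ f) ∧ f ≫ MB.counit = MA.counit

/-- `f` is a morphism of bimonoids (preserves all four structure maps). -/
def IsBimonHom [BraidedCategory C] {A B : C} (MA : _root_.BimonObj A) (MB : _root_.BimonObj B)
    (f : A ⟶ B) : Prop :=
  IsMonHom MA.toMonObj MB.toMonObj f ∧ IsComonHom MA.toComonObj MB.toComonObj f

/-- `z` is an antipode for the bimonoid `M`, i.e. `M` is a Hopf monoid. -/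
def IsAntipode [BraidedCategory C] {B : C} (M : _root_.BimonObj B) (z : B ⟶ B) : Prop :=
  M.comul ≫ (z ▷ B) ≫ M.mul = M.counit ≫ M.one ∧
    M.comul ≫ (B ◁ z) ≫ M.mul = M.counit ≫ M.one

/-- A comonoid is cocommutative when `c ∘ δ = δ`. -/
def IsCocomm [BraidedCategory C] {A : C} (M : _root_.ComonObj A) : Prop :=
  M.comul ≫ (β_ A A).hom = M.comul

/-! Counitality and `ε_B ∘ s = ε_A` give `j ∘ g = ⃗s` directly from the defining equation of `r`.
Since `z ∘ u_B = u_B`, the equalizing property of `j` gives `⃗s ∘ j = j`, hence `j ∘ g ∘ j = j`,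
and `g ∘ j = 1_E` because the equalizer `j` is a monomorphism. -/

theorem IsAntipode.one_comp [BraidedCategory C] {B : C} {M : _root_.BimonObj B} {z : B ⟶ B}
    (hz : IsAntipode M z) : M.one ≫ z = M.one :=
  calc M.one ≫ z = (λ_ (𝟙_ C)).inv ≫ (M.one ⊗ₘ M.one) ≫ (z ▷ B) ≫ M.mul := by
        rw [MonoidalCategory.tensorHom_def, assoc, whisker_exchange_assoc, M.mul_one]
        simp [← unitors_equal]
    _ = M.one ≫ M.comul ≫ (z ▷ B) ≫ M.mul := by rw [reassoc_of% M.one_comul]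
    _ = M.one := by rw [hz.1, reassoc_of% M.one_counit]

theorem comp_comul_whiskerLeft_mul_eq_self {A B E : C} (MA : _root_.MonObj A)
    (comul : A ⟶ A ⊗ A) (oneB : 𝟙_ C ⟶ B) (f : A ⟶ B) (t : B ⟶ A) (ht : oneB ≫ t = MA.one)
    (j : E ⟶ A) (hj : j ≫ comul ≫ (A ◁ f) = j ≫ (ρ_ A).inv ≫ (A ◁ oneB)) :
    j ≫ comul ≫ (A ◁ (f ≫ t)) ≫ MA.mul = j :=
  calc j ≫ comul ≫ (A ◁ (f ≫ t)) ≫ MA.mul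
      = (j ≫ comul ≫ (A ◁ f)) ≫ (A ◁ t) ≫ MA.mul := by simp
    _ = j ≫ (ρ_ A).inv ≫ (A ◁ (oneB ≫ t)) ≫ MA.mul := by rw [hj]; simp
    _ = j := by rw [ht, MA.mul_one]; simp

theorem comp_whiskerLeft_counit_rightUnitor_comp_eq {A B E : C} (MA : _root_.ComonObj A)
    (counitB : B ⟶ 𝟙_ C) (p : A ⟶ A) (s : A ⟶ B) (hs : s ≫ counitB = MA.counit)
    (j : E ⟶ A) (r : A ⟶ E ⊗ B)
    (hr : r ≫ (j ▷ B) = MA.comul ≫ (p ⊗ₘ s)) :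
    (r ≫ (E ◁ counitB) ≫ (ρ_ E).hom) ≫ j = p :=
  calc (r ≫ (E ◁ counitB) ≫ (ρ_ E).hom) ≫ j
      = r ≫ (j ▷ B) ≫ (A ◁ counitB) ≫ (ρ_ A).hom := by
        rw [← whisker_exchange_assoc]; simp
    _ = MA.comul ≫ (A ◁ MA.counit) ≫ (ρ_ A).hom ≫ p := by
        rw [reassoc_of% hr, MonoidalCategory.tensorHom_def, assoc, ← whiskerLeft_comp_assoc, hs,
          ← whisker_exchange_assoc]
        simp
    _ = p := by rw [reassoc_of% MA.comul_counit]; simp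

theorem statement5_general [SymmetricCategory C] {A B E : C}
    (MA : _root_.BimonObj A) (MB : _root_.BimonObj B) (z : B ⟶ B) (hz : IsAntipode MB z)
    (s : A ⟶ B) (i : B ⟶ A)
    (hs : IsBimonHom MA MB s) (hi : IsBimonHom MB MA i)
    (j : E ⟶ A)
    (hw : j ≫ (MA.comul ≫ (A ◁ s)) = j ≫ ((ρ_ A).inv ≫ (A ◁ MB.one)))
    (hE : IsLimit (Fork.ofι j hw))
    (r : A ⟶ E ⊗ B)
    (hr : r ≫ (j ▷ B) = MA.comul ≫ ((MA.comul ≫ (A ◁ (s ≫ z ≫ i)) ≫ MA.mul) ⊗ₘ s)) :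
    j ≫ (r ≫ (E ◁ MB.counit) ≫ (ρ_ E).hom) = 𝟙 E ∧
    (r ≫ (E ◁ MB.counit) ≫ (ρ_ E).hom) ≫ j =
      MA.comul ≫ (A ◁ (s ≫ z ≫ i)) ≫ MA.mul ∧
    IsSplitMono j := by
  have hgj :=
    comp_whiskerLeft_counit_rightUnitor_comp_eq MA.toComonObj MB.counit _ s hs.2.2 j r hr
  have hjs : j ≫ MA.comul ≫ (A ◁ (s ≫ z ≫ i)) ≫ MA.mul = j :=
    comp_comul_whiskerLeft_mul_eq_self MA.toMonObj MA.comul MB.one s (z ≫ i)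
      (by rw [← assoc, hz.one_comp, hi.1.2]) j hw
  have : Mono j := mono_of_isLimit_fork hE
  have hjg : j ≫ (r ≫ (E ◁ MB.counit) ≫ (ρ_ E).hom) = 𝟙 E := by
    rw [← cancel_mono j, assoc, hgj, hjs, id_comp]
  exact ⟨hjg, hgj, ⟨⟨⟨_, hjg⟩⟩⟩⟩

theorem statement5 [SymmetricCategory C] {A B E : C}
    (MA : _root_.BimonObj A) (MB : _root_.BimonObj B) (z : B ⟶ B) (hz : IsAntipode MB z)
    (s : A ⟶ B) (i : B ⟶ A)
    (hs : IsBimonHom MA MB s) (hi : IsBimonHom MB MA i)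
    (hsi : i ≫ s = 𝟙 B)
    (hcs : MA.comul ≫ (s ▷ A) ≫ (β_ B A).hom = MA.comul ≫ (A ◁ s))
    (j : E ⟶ A)
    (hw : j ≫ (MA.comul ≫ (A ◁ s)) = j ≫ ((ρ_ A).inv ≫ (A ◁ MB.one)))
    (hE : IsLimit (Fork.ofι j hw))
    (r : A ⟶ E ⊗ B)
    (hr : r ≫ (j ▷ B) = MA.comul ≫ ((MA.comul ≫ (A ◁ (s ≫ z ≫ i)) ≫ MA.mul) ⊗ₘ s))
    (hruniq : ∀ r' : A ⟶ E ⊗ B,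
        r' ≫ (j ▷ B) = MA.comul ≫ ((MA.comul ≫ (A ◁ (s ≫ z ≫ i)) ≫ MA.mul) ⊗ₘ s) →
        r' = r) :
    j ≫ (r ≫ (E ◁ MB.counit) ≫ (ρ_ E).hom) = 𝟙 E ∧
    (r ≫ (E ◁ MB.counit) ≫ (ρ_ E).hom) ≫ j =
      MA.comul ≫ (A ◁ (s ≫ z ≫ i)) ≫ MA.mul ∧
    IsSplitMono j :=
  statement5_general MA MB z hz s i hs hi j hw hE r hr
end

section
/- Let B be a cocommutative bimonoid and Y a bimonoid in M, let l : B⊗Y → Y be a left action making Y a B-module monoid and a B-module comonoid, and let k : Y → B be a bimonoid morphism satisfying (k⊗1_Y)∘δ_Y = (k⊗1_Y)∘c∘δ_Y and m_B∘((k∘l)⊗1_B)∘(1_B⊗c_{B,Y})∘(δ_B⊗1_Y) = m_B∘(1_B⊗k). Set x := (l⊗1_B)∘(1_B⊗c_{B,Y})∘(δ_B⊗1_Y) : B⊗Y → Y⊗B and δ_{Y⊗B} := (1_Y⊗c_{Y,B}⊗1_B)∘(δ_Y⊗δ_B). Then the equation (of morphisms Y⊗B⊗Y → Y⊗B) (m_Y⊗1_B)∘(1_Y⊗x)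 = (m_Y⊗1_B)∘(l⊗1_Y⊗1_B)∘(1_B⊗c_{Y⊗B,Y})∘((m_B∘(k⊗1_B))⊗1_Y⊗1_B⊗1_Y)∘(δ_{Y⊗B}⊗1_Y) holds if and only if the Peiffer condition m_Y∘(l⊗1_Y)∘(k⊗1_Y⊗1_Y)∘(1_Y⊗c_{Y,Y})∘(δ_Y⊗1_Y) = m_Y holds. -/
open CategoryTheory Category MonoidalCategory Limits

universe v u

variable {C : Type u} [Category.{v} C] [MonoidalCategory C]

/-- `l` is a left action of the monoid `B` on `Y`. -/
def IsAction {B Y : C} (MB : _root_.MonObj B) (l : B ⊗ Y ⟶ Y) : Prop :=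
  (MB.one ▷ Y) ≫ l = (λ_ Y).hom ∧
    (MB.mul ▷ Y) ≫ l = (α_ B B Y).hom ≫ (B ◁ l) ≫ l

/-- The action `l` makes the monoid `Y` a `B`-module monoid. -/
def IsModuleMonoid [BraidedCategory C] {B Y : C} (MB : _root_.BimonObj B) (MY : _root_.MonObj Y)
    (l : B ⊗ Y ⟶ Y) : Prop :=
  (ρ_ B).inv ≫ (B ◁ MY.one) ≫ l = MB.counit ≫ MY.one ∧
    (B ◁ MY.mul) ≫ l = (MB.comul ▷ (Y ⊗ Y)) ≫ mid4 B B Y Y ≫ (l ⊗ₘ l) ≫ MY.mul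

/-- The action `l` makes the comonoid `Y` a `B`-module comonoid. -/
def IsModuleComonoid [BraidedCategory C] {B Y : C} (MB : _root_.BimonObj B) (MY : _root_.ComonObj Y)
    (l : B ⊗ Y ⟶ Y) : Prop :=
  l ≫ MY.counit = (MB.counit ⊗ₘ MY.counit) ≫ (λ_ (𝟙_ C)).hom ∧
    l ≫ MY.comul = (MB.comul ⊗ₘ MY.comul) ≫ mid4 B B Y Y ≫ (l ⊗ₘ l)

/-- `x` is a distributive law from the monoid `B` to the monoid `Y`. -/
def IsDistLaw {B Y : C} (MB : _root_.MonObj B) (MY : _root_.MonObj Y) (x : B ⊗ Y ⟶ Y ⊗ B) : Prop :=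
  (λ_ Y).inv ≫ (MB.one ▷ Y) ≫ x = (ρ_ Y).inv ≫ (Y ◁ MB.one) ∧
  (ρ_ B).inv ≫ (B ◁ MY.one) ≫ x = (λ_ B).inv ≫ (MY.one ▷ B) ∧
  (MB.mul ▷ Y) ≫ x =
    (α_ B B Y).hom ≫ (B ◁ x) ≫ (α_ B Y B).inv ≫ (x ▷ B) ≫
      (α_ Y B B).hom ≫ (Y ◁ MB.mul) ∧
  (B ◁ MY.mul) ≫ x =
    (α_ B Y Y).inv ≫ (x ▷ Y) ≫ (α_ Y B Y).hom ≫ (Y ◁ x) ≫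
      (α_ Y Y B).inv ≫ (MY.mul ▷ B)

/-!
Writing `x` for the twisted action, the right-hand side equals `(P ⊗ 1) ∘ (1 ⊗ x)` with `P` the
Peiffer composite: after expanding `δ_B`, `δ_Y` and `m_B ∘ (k ⊗ 1)`, associativity of the action
turns `(k y₁ · b₁) ▷ y'` into `k y₁ ▷ (b₁ ▷ y')`, and what is left is naturality of the braiding.
The equivalence follows because `Q ↦ (Q ⊗ 1) ∘ (1 ⊗ x)` is injective: inserting `u_B` and
applying `ε_B` recovers `Q`, since `l` is unital and `u_B` is grouplike.
-/

section
variable [BraidedCategory C]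

lemma mid4_natural_left {W W' X Y Z : C} (f : W ⟶ W') :
    ((f ▷ X) ▷ (Y ⊗ Z)) ≫ mid4 W' X Y Z = mid4 W X Y Z ≫ ((f ▷ Y) ▷ (X ⊗ Z)) := by
  unfold mid4
  rw [associator_naturality_left_assoc, ← whisker_exchange_assoc, ← whisker_exchange_assoc,
    ← whisker_exchange_assoc, associator_inv_naturality_left]
  simp only [assoc]

lemma peiffer_braid (X₁ X₂ X₃ X₄ X₅ : C) :
    (α_ (X₁ ⊗ X₂) (X₃ ⊗ X₄) X₅).hom ≫ ((X₁ ⊗ X₂) ◁ (α_ X₃ X₄ X₅).hom) ≫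
      ((X₁ ⊗ X₂) ◁ (X₃ ◁ (β_ X₄ X₅).hom)) ≫ ((X₁ ⊗ X₂) ◁ (α_ X₃ X₅ X₄).inv) ≫
      (α_ (X₁ ⊗ X₂) (X₃ ⊗ X₅) X₄).inv ≫ ((α_ X₁ X₂ (X₃ ⊗ X₅)).hom ▷ X₄) ≫
      ((X₁ ◁ (β_ X₂ (X₃ ⊗ X₅)).hom) ▷ X₄) ≫ ((α_ X₁ (X₃ ⊗ X₅) X₂).inv ▷ X₄) =
    (mid4 X₁ X₂ X₃ X₄ ▷ X₅) ≫ (α_ (X₁ ⊗ X₃) (X₂ ⊗ X₄) X₅).hom ≫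
      ((X₁ ⊗ X₃) ◁ (β_ (X₂ ⊗ X₄) X₅).hom) ≫ (α_ (X₁ ⊗ X₃) X₅ (X₂ ⊗ X₄)).inv ≫
      (α_ ((X₁ ⊗ X₃) ⊗ X₅) X₂ X₄).inv ≫ ((α_ X₁ X₃ X₅).hom ▷ X₂ ▷ X₄) := by
  simp only [mid4, BraidedCategory.braiding_tensor_left_hom,
    BraidedCategory.braiding_tensor_right_hom, MonoidalCategory.whiskerLeft_comp,
    comp_whiskerRight, whisker_assoc, assoc, Iso.inv_hom_id_assoc]
  calc _ = ((α_ (X₁ ⊗ X₂) (X₃ ⊗ X₄) X₅).hom ≫ ((X₁ ⊗ X₂) ◁ (α_ X₃ X₄ X₅).hom) ≫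
          (α_ (X₁ ⊗ X₂) X₃ (X₄ ⊗ X₅)).inv ≫ ((α_ X₁ X₂ X₃).hom ▷ (X₄ ⊗ X₅))) ≫
          ((X₁ ⊗ (X₂ ⊗ X₃)) ◁ (β_ X₄ X₅).hom) ≫ ((X₁ ◁ (β_ X₂ X₃).hom) ▷ (X₅ ⊗ X₄)) ≫
          (((α_ X₁ X₃ X₂).inv ▷ (X₅ ⊗ X₄)) ≫ (α_ (X₁ ⊗ X₃) X₂ (X₅ ⊗ X₄)).hom ≫
            ((X₁ ⊗ X₃) ◁ (α_ X₂ X₅ X₄).inv) ≫ (α_ (X₁ ⊗ X₃) (X₂ ⊗ X₅) X₄).inv) ≫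
          (((X₁ ⊗ X₃) ◁ (β_ X₂ X₅).hom) ▷ X₄) ≫
          (((α_ (X₁ ⊗ X₃) X₅ X₂).inv ≫ ((α_ X₁ X₃ X₅).hom ▷ X₂)) ▷ X₄) := by monoidal
    _ = ((α_ (X₁ ⊗ X₂) (X₃ ⊗ X₄) X₅).hom ≫ ((X₁ ⊗ X₂) ◁ (α_ X₃ X₄ X₅).hom) ≫
          (α_ (X₁ ⊗ X₂) X₃ (X₄ ⊗ X₅)).inv ≫ ((α_ X₁ X₂ X₃).hom ▷ (X₄ ⊗ X₅))) ≫
          ((X₁ ◁ (β_ X₂ X₃).hom) ▷ (X₄ ⊗ X₅)) ≫ ((X₁ ⊗ (X₃ ⊗ X₂)) ◁ (β_ X₄ X₅).hom) ≫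
          (((α_ X₁ X₃ X₂).inv ▷ (X₅ ⊗ X₄)) ≫ (α_ (X₁ ⊗ X₃) X₂ (X₅ ⊗ X₄)).hom ≫
            ((X₁ ⊗ X₃) ◁ (α_ X₂ X₅ X₄).inv) ≫ (α_ (X₁ ⊗ X₃) (X₂ ⊗ X₅) X₄).inv) ≫
          (((X₁ ⊗ X₃) ◁ (β_ X₂ X₅).hom) ▷ X₄) ≫
          (((α_ (X₁ ⊗ X₃) X₅ X₂).inv ≫ ((α_ X₁ X₃ X₅).hom ▷ X₂)) ▷ X₄) := by
        rw [whisker_exchange_assoc]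
    _ = _ := by monoidal

lemma peiffer_braid_whisker {X₁ X₂ X₃ X₄ X₅ Z : C} (f : X₃ ⊗ X₅ ⟶ Z) :
    (α_ (X₁ ⊗ X₂) (X₃ ⊗ X₄) X₅).hom ≫ ((X₁ ⊗ X₂) ◁ (α_ X₃ X₄ X₅).hom) ≫
      ((X₁ ⊗ X₂) ◁ (X₃ ◁ (β_ X₄ X₅).hom)) ≫ ((X₁ ⊗ X₂) ◁ (α_ X₃ X₅ X₄).inv) ≫
      ((X₁ ⊗ X₂) ◁ (f ▷ X₄)) ≫ (α_ (X₁ ⊗ X₂) Z X₄).inv ≫ ((α_ X₁ X₂ Z).hom ▷ X₄) ≫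
      ((X₁ ◁ (β_ X₂ Z).hom) ▷ X₄) ≫ ((α_ X₁ Z X₂).inv ▷ X₄) =
    (mid4 X₁ X₂ X₃ X₄ ▷ X₅) ≫ (α_ (X₁ ⊗ X₃) (X₂ ⊗ X₄) X₅).hom ≫
      ((X₁ ⊗ X₃) ◁ (β_ (X₂ ⊗ X₄) X₅).hom) ≫ (α_ (X₁ ⊗ X₃) X₅ (X₂ ⊗ X₄)).inv ≫
      ((α_ X₁ X₃ X₅).hom ▷ (X₂ ⊗ X₄)) ≫ ((X₁ ◁ f) ▷ (X₂ ⊗ X₄)) ≫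
      (α_ (X₁ ⊗ Z) X₂ X₄).inv := by
  have hf : ((X₁ ⊗ X₂) ◁ f) ▷ X₄ ≫ (α_ X₁ X₂ Z).hom ▷ X₄ ≫ (X₁ ◁ (β_ X₂ Z).hom) ▷ X₄ ≫
      (α_ X₁ Z X₂).inv ▷ X₄ = (α_ X₁ X₂ (X₃ ⊗ X₅)).hom ▷ X₄ ≫
      (X₁ ◁ (β_ X₂ (X₃ ⊗ X₅)).hom) ▷ X₄ ≫ (α_ X₁ (X₃ ⊗ X₅) X₂).inv ▷ X₄ ≫
      ((X₁ ◁ f) ▷ X₂) ▷ X₄ := by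
    simp only [← comp_whiskerRight, associator_naturality_right_assoc,
      ← MonoidalCategory.whiskerLeft_comp_assoc, BraidedCategory.braiding_naturality_right,
      MonoidalCategory.whiskerLeft_comp, assoc, associator_inv_naturality_middle]
  rw [associator_inv_naturality_middle_assoc, hf, reassoc_of% peiffer_braid X₁ X₂ X₃ X₄ X₅]
  monoidal

variable {B Y W Z : C}

/-- The map `x` of the statement. -/
def actionTwist (MB : _root_.BimonObj B) (l : B ⊗ Y ⟶ Y) : B ⊗ Y ⟶ Y ⊗ B :=
  (MB.comul ▷ Y) ≫ (α_ B B Y).hom ≫ (B ◁ (β_ B Y).hom) ≫ (α_ B Y B).inv ≫ (l ▷ B)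

/-- `(Q ⊗ 1) ∘ (1 ⊗ x)`; for `Q = m_Y` this is the left-hand side of the theorem. -/
def twistComp (MB : _root_.BimonObj B) (l : B ⊗ Y ⟶ Y) (Q : W ⊗ Y ⟶ Z) :
    (W ⊗ B) ⊗ Y ⟶ Z ⊗ B :=
  (α_ W B Y).hom ≫ (W ◁ actionTwist MB l) ≫ (α_ W Y B).inv ≫ (Q ▷ B)

def peifferMap (MY : _root_.BimonObj Y) (l : B ⊗ Y ⟶ Y) (k : Y ⟶ B) : Y ⊗ Y ⟶ Y :=
  (MY.comul ▷ Y) ≫ (α_ Y Y Y).hom ≫ (Y ◁ (β_ Y Y).hom) ≫ (k ▷ (Y ⊗ Y)) ≫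
    (α_ B Y Y).inv ≫ (l ▷ Y) ≫ MY.mul

lemma one_whiskerRight_actionTwist (MB : _root_.BimonObj B) {l : B ⊗ Y ⟶ Y}
    (hl : (MB.one ▷ Y) ≫ l = (λ_ Y).hom) :
    (MB.one ▷ Y) ≫ actionTwist MB l = (λ_ Y).hom ≫ (ρ_ Y).inv ≫ (Y ◁ MB.one) := by
  unfold actionTwist
  slice_lhs 1 2 => rw [← comp_whiskerRight, MB.one_comul]
  simp only [MonoidalCategory.tensorHom_def, comp_whiskerRight, assoc, whisker_assoc,
    Iso.inv_hom_id_assoc]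
  rw [← MonoidalCategory.whiskerLeft_comp_assoc, BraidedCategory.braiding_naturality_left]
  simp only [MonoidalCategory.whiskerLeft_comp, assoc]
  rw [associator_inv_naturality_right_assoc, whisker_exchange, braiding_tensorUnit_left]
  simp only [MonoidalCategory.whiskerLeft_comp, assoc, MonoidalCategory.triangle_assoc]
  slice_lhs 1 3 => rw [← comp_whiskerRight, ← comp_whiskerRight]
  rw [show (λ_ (𝟙_ C)).inv ≫ MB.one ▷ 𝟙_ C ≫ (ρ_ B).hom = MB.one by simp [← unitors_equal]]
  simp only [assoc]
  rw [← whisker_exchange_assoc, associator_inv_naturality_left_assoc, ← comp_whiskerRight_assoc,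
    hl]
  monoidal

lemma twistComp_retraction (MB : _root_.BimonObj B) {l : B ⊗ Y ⟶ Y}
    (hl : (MB.one ▷ Y) ≫ l = (λ_ Y).hom) (Q : W ⊗ Y ⟶ Z) :
    ((ρ_ W).inv ▷ Y) ≫ ((W ◁ MB.one) ▷ Y) ≫ twistComp MB l Q ≫ (Z ◁ MB.counit) ≫
      (ρ_ Z).hom = Q := by
  simp only [twistComp, assoc]
  rw [associator_naturality_middle_assoc, ← MonoidalCategory.whiskerLeft_comp_assoc,
    one_whiskerRight_actionTwist MB hl]
  simp only [MonoidalCategory.whiskerLeft_comp, assoc]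
  rw [associator_inv_naturality_right_assoc, whisker_exchange_assoc]
  slice_lhs 7 8 => rw [← MonoidalCategory.whiskerLeft_comp, MB.one_counit]
  simp only [MonoidalCategory.whiskerLeft_id, id_comp]
  monoidal

lemma twistComp_injective (MB : _root_.BimonObj B) {l : B ⊗ Y ⟶ Y}
    (hl : (MB.one ▷ Y) ≫ l = (λ_ Y).hom) :
    Function.Injective (twistComp MB l (W := W) (Z := Z)) :=
  fun Q Q' h => by rw [← twistComp_retraction MB hl Q, h, twistComp_retraction MB hl Q']

lemma twistComp_whiskerRight_comp (MB : _root_.BimonObj B) (l : B ⊗ Y ⟶ Y) {W' : C}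
    (g : W ⟶ W') (R : W' ⊗ Y ⟶ Z) :
    twistComp MB l ((g ▷ Y) ≫ R) = ((g ▷ B) ▷ Y) ≫ twistComp MB l R := by
  simp only [twistComp, comp_whiskerRight, associator_naturality_left_assoc]
  rw [← whisker_exchange_assoc, associator_inv_naturality_left_assoc]

lemma peifferMap_eq (MY : _root_.BimonObj Y) (l : B ⊗ Y ⟶ Y) (k : Y ⟶ B) :
    peifferMap MY l k = ((MY.comul ≫ (k ▷ Y)) ▷ Y) ≫ (α_ B Y Y).hom ≫ (B ◁ (β_ Y Y).hom) ≫
      (α_ B Y Y).inv ≫ (l ▷ Y) ≫ MY.mul := by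
  rw [peifferMap, comp_whiskerRight, assoc, associator_naturality_left_assoc,
    whisker_exchange_assoc]

/-- The common normal form of the right-hand side of the theorem and of
`twistComp MB l (peifferMap MY l k)`: comultiplications and `k` first, then the braidings,
then `l ∘ (1 ⊗ l)` and `m_Y`. -/
def peifferExpanded (MB : _root_.BimonObj B) (MY : _root_.BimonObj Y) (l : B ⊗ Y ⟶ Y)
    (k : Y ⟶ B) : (Y ⊗ B) ⊗ Y ⟶ Y ⊗ B :=
  ((Y ◁ MB.comul) ▷ Y) ≫ (((MY.comul ≫ (k ▷ Y)) ▷ (B ⊗ B)) ▷ Y) ≫ (mid4 B Y B B ▷ Y) ≫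
    (α_ (B ⊗ B) (Y ⊗ B) Y).hom ≫ ((B ⊗ B) ◁ (β_ (Y ⊗ B) Y).hom) ≫
    (α_ (B ⊗ B) Y (Y ⊗ B)).inv ≫ ((α_ B B Y).hom ▷ (Y ⊗ B)) ≫ ((B ◁ l) ▷ (Y ⊗ B)) ≫
    (α_ (B ⊗ Y) Y B).inv ≫ ((l ▷ Y) ▷ B) ≫ (MY.mul ▷ B)

lemma twistComp_peifferMap (MB : _root_.BimonObj B) (MY : _root_.BimonObj Y) (l : B ⊗ Y ⟶ Y)
    (k : Y ⟶ B) : twistComp MB l (peifferMap MY l k) = peifferExpanded MB MY l k := by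
  rw [peifferMap_eq, twistComp_whiskerRight_comp]
  set g := MY.comul ≫ (k ▷ Y)
  simp only [twistComp, actionTwist, MonoidalCategory.whiskerLeft_comp, comp_whiskerRight, assoc]
  rw [← associator_naturality_middle_assoc, reassoc_of% peiffer_braid_whisker l]
  rw [← comp_whiskerRight_assoc, ← whisker_exchange, comp_whiskerRight_assoc]
  rfl

lemma eq_peifferExpanded_of_action_assoc (MB : _root_.BimonObj B) (MY : _root_.BimonObj Y)
    {l : B ⊗ Y ⟶ Y} (k : Y ⟶ B) (hl : (MB.mul ▷ Y) ≫ l = (α_ B B Y).hom ≫ (B ◁ l) ≫ l) :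
    (((MY.comul ⊗ₘ MB.comul) ≫ mid4 Y Y B B) ▷ Y) ≫
        ((((k ▷ B) ≫ MB.mul) ▷ (Y ⊗ B)) ▷ Y) ≫
        (α_ B (Y ⊗ B) Y).hom ≫ (B ◁ (β_ (Y ⊗ B) Y).hom) ≫ (α_ B Y (Y ⊗ B)).inv ≫
        (l ▷ (Y ⊗ B)) ≫ (α_ Y Y B).inv ≫ (MY.mul ▷ B) = peifferExpanded MB MY l k := by
  simp only [peifferExpanded, comp_whiskerRight, assoc, MonoidalCategory.tensorHom_def']
  slice_lhs 3 4 => rw [← comp_whiskerRight, ← mid4_natural_left, comp_whiskerRight]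
  simp only [assoc]
  rw [associator_naturality_left_assoc, ← whisker_exchange_assoc,
    associator_inv_naturality_left_assoc, ← comp_whiskerRight_assoc (MB.mul ▷ Y), hl]
  simp only [comp_whiskerRight, assoc, associator_inv_naturality_left_assoc]

end

theorem statement9_general [SymmetricCategory C] {B Y : C}
    (MB : _root_.BimonObj B)
    (MY : _root_.BimonObj Y)
    (l : B ⊗ Y ⟶ Y) (hl : IsAction MB.toMonObj l)
    (k : Y ⟶ B) :
    (α_ Y B Y).hom ≫
        (Y ◁ ((MB.comul ▷ Y) ≫ (α_ B B Y).hom ≫ (B ◁ (β_ B Y).hom) ≫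
          (α_ B Y B).inv ≫ (l ▷ B))) ≫
        (α_ Y Y B).inv ≫ (MY.mul ▷ B) =
      (((MY.comul ⊗ₘ MB.comul) ≫ mid4 Y Y B B) ▷ Y) ≫
        ((((k ▷ B) ≫ MB.mul) ▷ (Y ⊗ B)) ▷ Y) ≫
        (α_ B (Y ⊗ B) Y).hom ≫ (B ◁ (β_ (Y ⊗ B) Y).hom) ≫ (α_ B Y (Y ⊗ B)).inv ≫
        (l ▷ (Y ⊗ B)) ≫ (α_ Y Y B).inv ≫ (MY.mul ▷ B) ↔
    (MY.comul ▷ Y) ≫ (α_ Y Y Y).hom ≫ (Y ◁ (β_ Y Y).hom) ≫ (k ▷ (Y ⊗ Y)) ≫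
        (α_ B Y Y).inv ≫ (l ▷ Y) ≫ MY.mul = MY.mul := by
  change twistComp MB l MY.mul = _ ↔ peifferMap MY l k = MY.mul
  rw [eq_peifferExpanded_of_action_assoc MB MY k hl.2, ← twistComp_peifferMap,
    (twistComp_injective MB hl.1).eq_iff, eq_comm]

theorem statement9 [SymmetricCategory C] {B Y : C}
    (MB : _root_.BimonObj B) (hcoc : IsCocomm MB.toComonObj)
    (MY : _root_.BimonObj Y)
    (l : B ⊗ Y ⟶ Y) (hl : IsAction MB.toMonObj l)
    (hlm : IsModuleMonoid MB MY.toMonObj l)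
    (hlc : IsModuleComonoid MB MY.toComonObj l)
    (k : Y ⟶ B) (hk : IsBimonHom MY MB k)
    (hkc : MY.comul ≫ (k ▷ Y) = MY.comul ≫ (β_ Y Y).hom ≫ (k ▷ Y))
    (hpre : (MB.comul ▷ Y) ≫ (α_ B B Y).hom ≫ (B ◁ (β_ B Y).hom) ≫ (α_ B Y B).inv ≫
        ((l ≫ k) ▷ B) ≫ MB.mul = (B ◁ k) ≫ MB.mul) :
    (α_ Y B Y).hom ≫
        (Y ◁ ((MB.comul ▷ Y) ≫ (α_ B B Y).hom ≫ (B ◁ (β_ B Y).hom) ≫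
          (α_ B Y B).inv ≫ (l ▷ B))) ≫
        (α_ Y Y B).inv ≫ (MY.mul ▷ B) =
      (((MY.comul ⊗ₘ MB.comul) ≫ mid4 Y Y B B) ▷ Y) ≫
        ((((k ▷ B) ≫ MB.mul) ▷ (Y ⊗ B)) ▷ Y) ≫
        (α_ B (Y ⊗ B) Y).hom ≫ (B ◁ (β_ (Y ⊗ B) Y).hom) ≫ (α_ B Y (Y ⊗ B)).inv ≫
        (l ▷ (Y ⊗ B)) ≫ (α_ Y Y B).inv ≫ (MY.mul ▷ B) ↔
    (MY.comul ▷ Y) ≫ (α_ Y Y Y).hom ≫ (Y ◁ (β_ Y Y).hom) ≫ (k ▷ (Y ⊗ Y)) ≫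
        (α_ B Y Y).inv ≫ (l ▷ Y) ≫ MY.mul = MY.mul :=
  statement9_general MB MY l hl k
end

section
/- Let B and Y be bimonoids in M with B cocommutative, and let x : B⊗Y → Y⊗B be a distributive law from the monoid B to the monoid Y which is a comonoid morphism, i.e. (1_Y⊗c_{Y,B}⊗1_B)∘(δ_Y⊗δ_B)∘x = (x⊗x)∘(1_B⊗c_{B,Y}⊗1_Y)∘(δ_B⊗δ_Y) and (ε_Y⊗ε_B)∘x = ε_B⊗ε_Y, and which satisfies (ε_Y⊗1_B)∘x = 1_B⊗ε_Y. Then the left action l := (1_Y⊗ε_B)∘x makes Y a B-module monoid: l∘(1_B⊗u_Y) = u_Y∘ε_B and l∘(1_B⊗m_Y) = m_Y∘(l⊗l)∘(1_B⊗c_{B,Y}⊗1_Y)∘(δ_B⊗1_Y⊗1_Y). -/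
open CategoryTheory Category MonoidalCategory Limits

universe v u

variable {C : Type u} [Category.{v} C] [MonoidalCategory C]

/-! Capping both sides of the comonoid-morphism identity for `x` with `(1 ⊗ ε_B) ⊗ (ε_Y ⊗ 1)`
and using `(ε_Y ⊗ 1) ∘ x = 1 ⊗ ε_Y` gives `x = (l ⊗ 1) ∘ (1 ⊗ c) ∘ (δ_B ⊗ 1)`:
the distributive law is recovered from its action `l`. The unit axiom of a module monoid is the
unit axiom of `x` capped with `ε_B`; the multiplicative axiom is the law
`x ∘ (1 ⊗ m_Y) = (m_Y ⊗ 1) ∘ (1 ⊗ x) ∘ (x ⊗ 1)` capped with `ε_B`, after substituting this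
factorisation for the inner `x`. -/

def inducedAction {B Y : C} (ε : B ⟶ 𝟙_ C) (x : B ⊗ Y ⟶ Y ⊗ B) : B ⊗ Y ⟶ Y :=
  x ≫ (Y ◁ ε) ≫ (ρ_ Y).hom

theorem inducedAction_unit {B Y : C} {ε : B ⟶ 𝟙_ C} {η : 𝟙_ C ⟶ Y} {x : B ⊗ Y ⟶ Y ⊗ B}
    (h : (ρ_ B).inv ≫ (B ◁ η) ≫ x = (λ_ B).inv ≫ (η ▷ B)) :
    (ρ_ B).inv ≫ (B ◁ η) ≫ inducedAction ε x = ε ≫ η := by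
  rw [inducedAction, reassoc_of% h, ← whisker_exchange_assoc]
  simp [unitors_inv_equal]

section Braided

variable [BraidedCategory C]

theorem mid4_natural {X₁ X₂ Y₁ Y₂ U₁ U₂ V₁ V₂ : C} (f₁ : X₁ ⟶ Y₁) (f₂ : X₂ ⟶ Y₂)
    (g₁ : U₁ ⟶ V₁) (g₂ : U₂ ⟶ V₂) :
    ((f₁ ⊗ₘ f₂) ⊗ₘ g₁ ⊗ₘ g₂) ≫ mid4 Y₁ Y₂ V₁ V₂ =
      mid4 X₁ X₂ U₁ U₂ ≫ ((f₁ ⊗ₘ g₁) ⊗ₘ f₂ ⊗ₘ g₂) :=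
  tensorμ_natural f₁ f₂ g₁ g₂

theorem rightUnitor_inv_tensor_leftUnitor_inv_mid4 (X Z : C) :
    ((ρ_ X).inv ⊗ₘ (λ_ Z).inv) ≫ mid4 X (𝟙_ C) (𝟙_ C) Z ≫ ((ρ_ X).hom ⊗ₘ (λ_ Z).hom) =
      𝟙 (X ⊗ Z) := by
  simp only [mid4, braiding_tensorUnit_left]
  monoidal

theorem whiskerLeft_rightUnitor_inv_mid4 (W X Y : C) :
    ((W ⊗ X) ◁ (ρ_ Y).inv) ≫ mid4 W X Y (𝟙_ C) ≫ ((W ⊗ Y) ◁ (ρ_ X).hom) =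
      (α_ W X Y).hom ≫ (W ◁ (β_ X Y).hom) ≫ (α_ W Y X).inv := by
  simp only [mid4]
  monoidal

variable {B Y : C}

theorem comul_tensor_comul_mid4_counit (MB : _root_.ComonObj B) (MY : _root_.ComonObj Y) :
    (MY.comul ⊗ₘ MB.comul) ≫ mid4 Y Y B B ≫
      (((Y ◁ MB.counit) ≫ (ρ_ Y).hom) ⊗ₘ ((MY.counit ▷ B) ≫ (λ_ B).hom)) = 𝟙 (Y ⊗ B) := by
  rw [← tensorHom_comp_tensorHom, ← id_tensorHom, ← tensorHom_id, ← reassoc_of% mid4_natural,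
    tensorHom_comp_tensorHom_assoc, id_tensorHom, tensorHom_id, MY.comul_counit,
    MB.counit_comul, rightUnitor_inv_tensor_leftUnitor_inv_mid4]

theorem eq_comul_inducedAction (MB : _root_.ComonObj B) (MY : _root_.ComonObj Y)
    {x : B ⊗ Y ⟶ Y ⊗ B}
    (hxδ : x ≫ (MY.comul ⊗ₘ MB.comul) ≫ mid4 Y Y B B =
      (MB.comul ⊗ₘ MY.comul) ≫ mid4 B B Y Y ≫ (x ⊗ₘ x))
    (hxe : x ≫ (MY.counit ▷ B) ≫ (λ_ B).hom = (B ◁ MY.counit) ≫ (ρ_ B).hom) :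
    x = (MB.comul ▷ Y) ≫ (α_ B B Y).hom ≫ (B ◁ (β_ B Y).hom) ≫ (α_ B Y B).inv ≫
      (inducedAction MB.counit x ▷ B) := by
  have hcapped := hxδ =≫ (((Y ◁ MB.counit) ≫ (ρ_ Y).hom) ⊗ₘ ((MY.counit ▷ B) ≫ (λ_ B).hom))
  simp only [assoc, comul_tensor_comul_mid4_counit, comp_id] at hcapped
  refine hcapped.trans ?_
  have hcap : (x ≫ (Y ◁ MB.counit) ≫ (ρ_ Y).hom) ⊗ₘ ((B ◁ MY.counit) ≫ (ρ_ B).hom) =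
      ((𝟙 B ⊗ₘ 𝟙 Y) ⊗ₘ (𝟙 B ⊗ₘ MY.counit)) ≫ (inducedAction MB.counit x ⊗ₘ (ρ_ B).hom) := by
    rw [tensorHom_comp_tensorHom, id_tensorHom_id, id_comp, id_tensorHom, inducedAction]
  rw [tensorHom_comp_tensorHom, hxe, hcap, ← reassoc_of% mid4_natural,
    tensorHom_comp_tensorHom_assoc, id_tensorHom_id, comp_id, id_tensorHom, MY.comul_counit,
    MonoidalCategory.tensorHom_def, tensorHom_def', assoc,
    reassoc_of% whiskerLeft_rightUnitor_inv_mid4]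

theorem whiskerLeft_mul_inducedAction {ε : B ⟶ 𝟙_ C} {x : B ⊗ Y ⟶ Y ⊗ B}
    {δ : B ⟶ B ⊗ B} {μ : Y ⊗ Y ⟶ Y}
    (hmul : (B ◁ μ) ≫ x =
      (α_ B Y Y).inv ≫ (x ▷ Y) ≫ (α_ Y B Y).hom ≫ (Y ◁ x) ≫ (α_ Y Y B).inv ≫ (μ ▷ B))
    (hfactor : x = (δ ▷ Y) ≫ (α_ B B Y).hom ≫ (B ◁ (β_ B Y).hom) ≫ (α_ B Y B).inv ≫
      (inducedAction ε x ▷ B)) :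
    (B ◁ μ) ≫ inducedAction ε x =
      (δ ▷ (Y ⊗ Y)) ≫ mid4 B B Y Y ≫ (inducedAction ε x ⊗ₘ inducedAction ε x) ≫ μ := by
  have hμ : (B ◁ μ) ≫ inducedAction ε x =
      (α_ B Y Y).inv ≫ (x ▷ Y) ≫ (α_ Y B Y).hom ≫ (Y ◁ inducedAction ε x) ≫ μ := by
    rw [inducedAction, reassoc_of% hmul, ← whisker_exchange_assoc]
    simp
  rw [hμ]
  generalize inducedAction ε x = l at hfactor ⊢
  subst hfactor
  simp only [mid4, MonoidalCategory.tensorHom_def]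
  monoidal

end Braided

theorem statement11_general [SymmetricCategory C] {B Y : C}
    (MB : _root_.BimonObj B)
    (MY : _root_.BimonObj Y)
    (x : B ⊗ Y ⟶ Y ⊗ B) (hx : IsDistLaw MB.toMonObj MY.toMonObj x)
    (hxδ : x ≫ (MY.comul ⊗ₘ MB.comul) ≫ mid4 Y Y B B =
      (MB.comul ⊗ₘ MY.comul) ≫ mid4 B B Y Y ≫ (x ⊗ₘ x))
    (hxe : x ≫ (MY.counit ▷ B) ≫ (λ_ B).hom = (B ◁ MY.counit) ≫ (ρ_ B).hom) :
    IsModuleMonoid MB MY.toMonObj (x ≫ (Y ◁ MB.counit) ≫ (ρ_ Y).hom) :=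
  have hfactor := eq_comul_inducedAction MB.toComonObj MY.toComonObj hxδ hxe
  ⟨inducedAction_unit hx.2.1, whiskerLeft_mul_inducedAction hx.2.2.2 hfactor⟩

theorem statement11 [SymmetricCategory C] {B Y : C}
    (MB : _root_.BimonObj B) (hcoc : IsCocomm MB.toComonObj)
    (MY : _root_.BimonObj Y)
    (x : B ⊗ Y ⟶ Y ⊗ B) (hx : IsDistLaw MB.toMonObj MY.toMonObj x)
    (hxδ : x ≫ (MY.comul ⊗ₘ MB.comul) ≫ mid4 Y Y B B =
      (MB.comul ⊗ₘ MY.comul) ≫ mid4 B B Y Y ≫ (x ⊗ₘ x))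
    (hxε : x ≫ (MY.counit ⊗ₘ MB.counit) = MB.counit ⊗ₘ MY.counit)
    (hxe : x ≫ (MY.counit ▷ B) ≫ (λ_ B).hom = (B ◁ MY.counit) ≫ (ρ_ B).hom) :
    IsModuleMonoid MB MY.toMonObj (x ≫ (Y ◁ MB.counit) ≫ (ρ_ Y).hom) :=
  statement11_general MB MY x hx hxδ hxe
end

section
/- Let B and Y be bimonoids in M with B cocommutative, and let x : B⊗Y → Y⊗B be a distributive law from the monoid B to the monoid Y which is a comonoid morphism, i.e. (1_Y⊗c_{Y,B}⊗1_B)∘(δ_Y⊗δ_B)∘x = (x⊗x)∘(1_B⊗c_{B,Y}⊗1_Y)∘(δ_B⊗δ_Y) and (ε_Y⊗ε_B)∘x = ε_B⊗ε_Y, and which satisfies (ε_Y⊗1_B)∘x = 1_B⊗ε_Y. Then the left action l := (1_Y⊗ε_B)∘x makes Y a B-module comonoid: ε_Y∘l = ε_B⊗ε_Y and δ_Y∘l = (l⊗l)∘(1_B⊗c_{B,Y}⊗1_Y)∘(δ_B⊗δ_Y). -/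
open CategoryTheory Category MonoidalCategory Limits

universe v u

variable {C : Type u} [Category.{v} C] [MonoidalCategory C]

/-! The action is `l = x ≫ π`, where `π : Y ⊗ B ⟶ Y` discards `B` through `ε_B`. Because `ε_B`
is itself a comonoid morphism, `π` is a comonoid morphism from the tensor-product comonoid
`Y ⊗ B` to `Y`; so `l` is a composite of comonoid morphisms `B ⊗ Y ⟶ Y ⊗ B ⟶ Y`, which is
precisely the module-comonoid condition. -/

theorem ComonObj.comul_comp_counit_tensorHom_counit {A : C} (M : _root_.ComonObj A) :
    M.comul ≫ (M.counit ⊗ₘ M.counit) = M.counit ≫ (λ_ (𝟙_ C)).inv := by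
  rw [MonoidalCategory.tensorHom_def, ← assoc, M.counit_comul, leftUnitor_inv_naturality]

theorem mid4_eq_tensorμ [BraidedCategory C] (W X Y Z : C) : mid4 W X Y Z = tensorμ W X Y Z := rfl

theorem tensorHom_comul_comp_mid4_comp_counit [BraidedCategory C] {X X₁ X₂ B : C}
    (f : X ⟶ X₁ ⊗ X₂) (M : _root_.ComonObj B) :
    (f ⊗ₘ M.comul) ≫ mid4 X₁ X₂ B B ≫
        (((X₁ ◁ M.counit) ≫ (ρ_ X₁).hom) ⊗ₘ ((X₂ ◁ M.counit) ≫ (ρ_ X₂).hom)) =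
      (X ◁ M.counit) ≫ (ρ_ X).hom ≫ f := by
  calc (f ⊗ₘ M.comul) ≫ mid4 X₁ X₂ B B ≫
          (((X₁ ◁ M.counit) ≫ (ρ_ X₁).hom) ⊗ₘ ((X₂ ◁ M.counit) ≫ (ρ_ X₂).hom))
      = (f ⊗ₘ M.comul ≫ (M.counit ⊗ₘ M.counit)) ≫ tensorμ X₁ X₂ (𝟙_ C) (𝟙_ C) ≫
          ((ρ_ X₁).hom ⊗ₘ (ρ_ X₂).hom) := by
        rw [mid4_eq_tensorμ, ← tensorHom_comp_tensorHom, ← tensorμ_natural_right_assoc,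
          tensorHom_comp_whiskerLeft_assoc]
    _ = (f ⊗ₘ M.counit) ≫ (ρ_ (X₁ ⊗ X₂)).hom := by
        rw [M.comul_comp_counit_tensorHom_counit, ← tensorHom_comp_whiskerLeft_assoc,
          ← tensor_right_unitality]
    _ = (X ◁ M.counit) ≫ (ρ_ X).hom ≫ f := by
        rw [tensorHom_def', assoc, rightUnitor_naturality]

theorem statement12_general [SymmetricCategory C] {B Y : C}
    (MB : _root_.BimonObj B)
    (MY : _root_.BimonObj Y)
    (x : B ⊗ Y ⟶ Y ⊗ B)
    (hxδ : x ≫ (MY.comul ⊗ₘ MB.comul) ≫ mid4 Y Y B B =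
      (MB.comul ⊗ₘ MY.comul) ≫ mid4 B B Y Y ≫ (x ⊗ₘ x))
    (hxε : x ≫ (MY.counit ⊗ₘ MB.counit) = MB.counit ⊗ₘ MY.counit) :
    IsModuleComonoid MB MY.toComonObj (x ≫ (Y ◁ MB.counit) ≫ (ρ_ Y).hom) := by
  constructor
  · rw [assoc, assoc, ← rightUnitor_naturality, ← tensorHom_def'_assoc, ← assoc, hxε,
      unitors_equal]
  · calc (x ≫ (Y ◁ MB.counit) ≫ (ρ_ Y).hom) ≫ MY.comul
        = (x ≫ (MY.comul ⊗ₘ MB.comul) ≫ mid4 Y Y B B) ≫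
            (((Y ◁ MB.counit) ≫ (ρ_ Y).hom) ⊗ₘ ((Y ◁ MB.counit) ≫ (ρ_ Y).hom)) := by
          rw [assoc, assoc, ← tensorHom_comul_comp_mid4_comp_counit, assoc, assoc]
      _ = _ := by
          rw [hxδ]
          simp only [← tensorHom_comp_tensorHom, assoc]

theorem statement12 [SymmetricCategory C] {B Y : C}
    (MB : _root_.BimonObj B) (hcoc : IsCocomm MB.toComonObj)
    (MY : _root_.BimonObj Y)
    (x : B ⊗ Y ⟶ Y ⊗ B) (hx : IsDistLaw MB.toMonObj MY.toMonObj x)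
    (hxδ : x ≫ (MY.comul ⊗ₘ MB.comul) ≫ mid4 Y Y B B =
      (MB.comul ⊗ₘ MY.comul) ≫ mid4 B B Y Y ≫ (x ⊗ₘ x))
    (hxε : x ≫ (MY.counit ⊗ₘ MB.counit) = MB.counit ⊗ₘ MY.counit)
    (hxe : x ≫ (MY.counit ▷ B) ≫ (λ_ B).hom = (B ◁ MY.counit) ≫ (ρ_ B).hom) :
    IsModuleComonoid MB MY.toComonObj (x ≫ (Y ◁ MB.counit) ≫ (ρ_ Y).hom) :=
  statement12_general MB MY x hxδ hxε
end
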